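/- arXiv:2104.09422 — 2 statements merged into one kernel-verified Lean document; each statement's English description precedes it below -/
import Mathlib

section
/- Let r ≥ 2 and 1 ≤ i ≤ r be integers, and n a nonnegative integer. The number of partitions of n whose (i−1)-bottom dissection has all bottom rectangles above B'_{r−1} empty equals the number of partitions of n whose (r−i)-Durfee dissection has all Durfee squares below D_{r−1} empty. -/
/-- A partition of `n`: a non-increasing list of positive integers summing to `n`. -/
def IsPartitionOf (n : ℕ) (l : List ℕ) : Prop :=
  l.Pairwise (· ≥ ·) ∧ (∀ x ∈ l, 0 < x) ∧ l.sum = n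

/-- The size of the Durfee square of a partition (given as a list of parts):
the largest `k` such that the first `k` parts are all `≥ k`. -/
def durfSq (l : List ℕ) : ℕ :=
  Nat.findGreatest (fun k => k ≤ l.length ∧ ∀ j < k, k ≤ l.getD j 0) l.length

/-- The parameter `k` of the horizontal Durfee rectangle (`k` columns, `k − 1` rows):
the largest `k` with `k − 1 ≤` the number of parts and the first `k − 1` parts all `≥ k`.
A `1 × 0` rectangle (`k = 1`) is always allowed. -/
def durfRectH (l : List ℕ) : ℕ :=
  Nat.findGreatest (fun k => k - 1 ≤ l.length ∧ ∀ j < k - 1, k ≤ l.getD j 0) (l.length + 1)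

/-- Remove `m` successive Durfee squares from the top of the partition. -/
def sqSteps : ℕ → List ℕ → List ℕ
  | 0, l => l
  | m + 1, l => sqSteps m (l.drop (durfSq l))

/-- Remove `m` successive horizontal Durfee rectangles from the top of the partition. -/
def rectSteps : ℕ → List ℕ → List ℕ
  | 0, l => l
  | m + 1, l => rectSteps m (l.drop (durfRectH l - 1))

/-- Remove `m` successive bottom squares from the bottom of the partition: a bottom square
has side equal to the smallest part, and occupies that many rows at the bottom. -/
def botSqSteps : ℕ → List ℕ → List ℕ
  | 0, l => l
  | m + 1, l => botSqSteps m (l.take (l.length - l.getLastD 0))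

/-- Remove `m` successive bottom rectangles (of size `λ_s × (λ_s − 1)`) from the bottom. -/
def botRectSteps : ℕ → List ℕ → List ℕ
  | 0, l => l
  | m + 1, l => botRectSteps m (l.take (l.length - (l.getLastD 0 - 1)))

/-!
Read the rows of a partition as positions `0, 1, …, s`. Both dissections cut the rows into
consecutive blocks, `r - i` horizontal rectangles followed by `i - 1` squares from the top; a
block of rows `u+1, …, v` carries a `(v-u+d) × (v-u)` shape (`d = 1` for a rectangle, `d = 0` for
a square) exactly when `λ_v ≥ v - u + d`, since the parts decrease. The Durfee dissection is the
top-down greedy cutting (each block as tall as possible), the bottom dissection the bottom-up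
greedy one. By the usual exchange argument, after each step the top-down greedy cut lies at least
as far down as the corresponding cut of any admissible cutting, and the bottom-up one at least as
far up, so each dissection exhausts the partition iff some admissible cutting exists. The two
conditions therefore agree partition by partition.
-/

theorem antitone_getD_of_pairwise_ge {l : List ℕ} (hl : l.Pairwise (· ≥ ·)) :
    Antitone fun j => l.getD j 0 := by
  intro i j hij
  dsimp only
  rcases lt_or_ge j l.length with hj | hj
  · rw [List.getD_eq_getElem _ _ hj, List.getD_eq_getElem _ _ (by omega)]
    rcases hij.eq_or_lt with rfl | hlt
    · rfl
    · exact List.pairwise_iff_getElem.1 hl _ _ _ _ hlt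
  · rw [List.getD_eq_default _ _ hj]
    exact Nat.zero_le _

/-- Rows `u+1, …, v` (1-indexed) carry a block of `v - u` rows and `v - u + d` columns. -/
def IsBlock (l : List ℕ) (d u v : ℕ) : Prop :=
  u = v ∨ (u < v ∧ v - u + d ≤ l.getD (v - 1) 0)

/-- Rows `u+1, …, e` split into consecutive blocks with column excesses `ds`, from the top. -/
def Dissects (l : List ℕ) : List ℕ → ℕ → ℕ → Prop
  | [], u, e => u = e
  | d :: ds, u, e => ∃ v, IsBlock l d u v ∧ Dissects l ds v e

section IsBlock

variable {l : List ℕ} {d u v : ℕ}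

theorem IsBlock.le (h : IsBlock l d u v) : u ≤ v := by
  rcases h with rfl | ⟨huv, -⟩ <;> omega

theorem IsBlock.le_length (h : IsBlock l d u v) (hu : u ≤ l.length) : v ≤ l.length := by
  rcases h with rfl | ⟨huv, hv⟩
  · exact hu
  · by_contra! hlen
    rw [List.getD_eq_default _ _ (by omega)] at hv
    omega

theorem IsBlock.mono_left {u' : ℕ} (h : IsBlock l d u v) (hu : u ≤ u') (hv : u' ≤ v) :
    IsBlock l d u' v := by
  rcases hv.eq_or_lt with rfl | hlt
  · exact Or.inl rfl
  · rcases h with rfl | ⟨-, hb⟩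
    · omega
    · exact Or.inr ⟨hlt, by omega⟩

theorem IsBlock.mono_right (hl : l.Pairwise (· ≥ ·)) {v' : ℕ} (h : IsBlock l d u v)
    (hu : u ≤ v') (hv : v' ≤ v) : IsBlock l d u v' := by
  rcases hu.eq_or_lt with rfl | hlt
  · exact Or.inl rfl
  · rcases h with rfl | ⟨-, hb⟩
    · omega
    · have : l.getD (v - 1) 0 ≤ l.getD (v' - 1) 0 :=
        antitone_getD_of_pairwise_ge hl (show v' - 1 ≤ v - 1 by omega)
      exact Or.inr ⟨hlt, by omega⟩

theorem isBlock_drop_iff {k : ℕ} : IsBlock (l.drop u) d 0 k ↔ IsBlock l d u (u + k) := by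
  rcases Nat.eq_zero_or_pos k with rfl | hk
  · simp [IsBlock]
  · have hget : (l.drop u).getD (k - 1) 0 = l.getD (u + k - 1) 0 := by
      rw [List.getD_eq_getElem?_getD, List.getElem?_drop, ← List.getD_eq_getElem?_getD]
      congr 1
      omega
    simp only [IsBlock, hget]
    omega

end IsBlock

section Dissects

variable {l : List ℕ}

theorem dissects_refl (ds : List ℕ) (u : ℕ) : Dissects l ds u u := by
  induction ds with
  | nil => rfl
  | cons d ds ih => exact ⟨u, Or.inl rfl, ih⟩

theorem dissects_append {ds₁ ds₂ : List ℕ} {u e : ℕ} :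
    Dissects l (ds₁ ++ ds₂) u e ↔ ∃ v, Dissects l ds₁ u v ∧ Dissects l ds₂ v e := by
  induction ds₁ generalizing u with
  | nil => exact ⟨fun h => ⟨u, rfl, h⟩, fun ⟨_, rfl, h⟩ => h⟩
  | cons d ds ih =>
    simp only [List.cons_append, Dissects, ih]
    exact ⟨fun ⟨w, hb, v, h₁, h₂⟩ => ⟨v, ⟨w, hb, h₁⟩, h₂⟩,
      fun ⟨v, ⟨w, hb, h₁⟩, h₂⟩ => ⟨w, hb, v, h₁, h₂⟩⟩

theorem dissects_singleton {d u e : ℕ} : Dissects l [d] u e ↔ IsBlock l d u e := by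
  simp [Dissects]

theorem Dissects.mono_left {ds : List ℕ} {u u' e : ℕ} (h : Dissects l ds u e) (hu : u ≤ u')
    (he : u' ≤ e) : Dissects l ds u' e := by
  induction ds generalizing u u' with
  | nil =>
    change u = e at h
    change u' = e
    omega
  | cons d ds ih =>
    obtain ⟨v, hb, hr⟩ := h
    rcases le_or_gt v u' with hv | hv
    · exact ⟨u', Or.inl rfl, ih hr hv he⟩
    · exact ⟨v, hb.mono_left hu hv.le, hr⟩

theorem Dissects.mono_right (hl : l.Pairwise (· ≥ ·)) {ds : List ℕ} {u e e' : ℕ}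
    (h : Dissects l ds u e) (hu : u ≤ e') (he : e' ≤ e) : Dissects l ds u e' := by
  induction ds generalizing u with
  | nil =>
    change u = e at h
    change u = e'
    omega
  | cons d ds ih =>
    obtain ⟨v, hb, hr⟩ := h
    rcases le_or_gt v e' with hv | hv
    · exact ⟨v, hb, ih hr hv⟩
    · exact ⟨e', hb.mono_right hl hu hv.le, dissects_refl ds e'⟩

end Dissects

section Greedy

variable {l : List ℕ}

theorem isGreatest_durfSq (hl : l.Pairwise (· ≥ ·)) :
    IsGreatest {k | IsBlock l 0 0 k} (durfSq l) := by
  constructor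
  · rcases Nat.eq_zero_or_pos (durfSq l) with h0 | hpos
    · exact Or.inl h0.symm
    · have hspec :=
        (Nat.findGreatest_of_ne_zero (m := durfSq l) rfl hpos.ne').2 (durfSq l - 1) (by omega)
      exact Or.inr ⟨hpos, by omega⟩
  · rintro k (rfl | ⟨hk, hb⟩)
    · exact Nat.zero_le _
    · have hlen : k ≤ l.length := IsBlock.le_length (Or.inr ⟨hk, hb⟩) (Nat.zero_le _)
      refine Nat.le_findGreatest hlen ⟨hlen, fun j hj => ?_⟩
      have : l.getD (k - 1) 0 ≤ l.getD j 0 :=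
        antitone_getD_of_pairwise_ge hl (show j ≤ k - 1 by omega)
      omega

theorem isGreatest_durfRectH_sub_one (hl : l.Pairwise (· ≥ ·)) :
    IsGreatest {k | IsBlock l 1 0 k} (durfRectH l - 1) := by
  have hone : 1 ≤ durfRectH l :=
    Nat.le_findGreatest (by omega) ⟨by omega, fun j hj => by omega⟩
  constructor
  · rcases Nat.lt_or_ge (durfRectH l) 2 with hlt | hge
    · exact Or.inl (by omega)
    · have hspec := (Nat.findGreatest_of_ne_zero (m := durfRectH l) rfl (by omega)).2
        (durfRectH l - 2) (by omega)
      refine Or.inr ⟨by omega, ?_⟩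
      rw [show durfRectH l - 1 - 1 = durfRectH l - 2 by omega]
      omega
  · rintro k (rfl | ⟨hk, hb⟩)
    · exact Nat.zero_le _
    · have hlen : k ≤ l.length := IsBlock.le_length (Or.inr ⟨hk, hb⟩) (Nat.zero_le _)
      suffices k + 1 ≤ durfRectH l by omega
      refine Nat.le_findGreatest (by omega) ⟨by omega, fun j hj => ?_⟩
      have : l.getD (k - 1) 0 ≤ l.getD j 0 :=
        antitone_getD_of_pairwise_ge hl (show j ≤ k - 1 by omega)
      omega

end Greedy

section TopDown

variable {l : List ℕ}

theorem drop_drop_eq_nil_iff_dissects_cons (hl : l.Pairwise (· ≥ ·)) {d : ℕ} {ds : List ℕ}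
    {g : List ℕ → ℕ}
    (hg : ∀ x : List ℕ, x.Pairwise (· ≥ ·) → IsGreatest {k | IsBlock x d 0 k} (g x))
    {F : List ℕ → List ℕ}
    (hF : ∀ u ≤ l.length, F (l.drop u) = [] ↔ Dissects l ds u l.length)
    {u : ℕ} (hu : u ≤ l.length) :
    F ((l.drop u).drop (g (l.drop u))) = [] ↔ Dissects l (d :: ds) u l.length := by
  obtain ⟨hblock, hmax⟩ := hg _ (hl.drop (i := u))
  have hblock' : IsBlock l d u (u + g (l.drop u)) := isBlock_drop_iff.1 hblock
  have hlen := hblock'.le_length hu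
  rw [List.drop_drop, hF _ hlen]
  constructor
  · exact fun h => ⟨_, hblock', h⟩
  · rintro ⟨v, hb, hr⟩
    have hv : v ≤ u + g (l.drop u) := by
      have := hmax (isBlock_drop_iff.2 (by rwa [Nat.add_sub_cancel' hb.le]) : v - u ∈ _)
      omega
    exact hr.mono_left hv hlen

theorem sqSteps_drop_eq_nil_iff (hl : l.Pairwise (· ≥ ·)) (a : ℕ) {u : ℕ}
    (hu : u ≤ l.length) :
    sqSteps a (l.drop u) = [] ↔ Dissects l (List.replicate a 0) u l.length := by
  induction a generalizing u with
  | zero =>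
    change l.drop u = [] ↔ u = l.length
    rw [List.drop_eq_nil_iff]
    omega
  | succ a ih =>
    exact drop_drop_eq_nil_iff_dissects_cons hl (F := sqSteps a) (fun _ => isGreatest_durfSq)
      (fun _ hu => ih hu) hu

theorem sqSteps_rectSteps_drop_eq_nil_iff (hl : l.Pairwise (· ≥ ·)) (a b : ℕ) {u : ℕ}
    (hu : u ≤ l.length) :
    sqSteps a (rectSteps b (l.drop u)) = [] ↔
      Dissects l (List.replicate b 1 ++ List.replicate a 0) u l.length := by
  induction b generalizing u with
  | zero => exact sqSteps_drop_eq_nil_iff hl a hu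
  | succ b ih =>
    exact drop_drop_eq_nil_iff_dissects_cons hl (F := fun x => sqSteps a (rectSteps b x))
      (fun _ => isGreatest_durfRectH_sub_one) (fun _ hu => ih hu) hu

end TopDown

section BottomUp

variable {l : List ℕ}

theorem take_take_length_sub_getLastD {t : ℕ} (ht : t ≤ l.length) (d : ℕ) :
    (l.take t).take ((l.take t).length - ((l.take t).getLastD 0 - d)) =
      l.take (t - (l.getD (t - 1) 0 - d)) := by
  rcases Nat.eq_zero_or_pos t with rfl | hpos
  · simp
  · have hlast : (l.take t).getLastD 0 = l.getD (t - 1) 0 := by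
      rw [List.getLastD_eq_getLast?, List.getLast?_eq_getElem?, List.getD_eq_getElem?_getD,
        List.length_take, List.getElem?_take_of_lt (by omega), min_eq_left ht]
    rw [hlast, List.take_take, List.length_take, min_eq_left ht,
      min_eq_left (Nat.sub_le _ _)]

theorem take_take_eq_nil_iff_dissects_append (hl : l.Pairwise (· ≥ ·)) {d : ℕ} {ds : List ℕ}
    {F : List ℕ → List ℕ} (hF : ∀ t ≤ l.length, F (l.take t) = [] ↔ Dissects l ds 0 t)
    {t : ℕ} (ht : t ≤ l.length) :
    F ((l.take t).take ((l.take t).length - ((l.take t).getLastD 0 - d))) = [] ↔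
      Dissects l (ds ++ [d]) 0 t := by
  rw [take_take_length_sub_getLastD ht, hF _ (by omega), dissects_append]
  simp only [dissects_singleton]
  constructor
  · refine fun h => ⟨_, h, ?_⟩
    rcases (Nat.sub_le t (l.getD (t - 1) 0 - d)).eq_or_lt with heq | hlt
    · exact Or.inl heq
    · exact Or.inr ⟨hlt, by omega⟩
  · rintro ⟨v, hr, hb⟩
    refine hr.mono_right hl (Nat.zero_le _) ?_
    rcases hb with rfl | ⟨-, hb⟩ <;> omega

theorem botRectSteps_take_eq_nil_iff (hl : l.Pairwise (· ≥ ·)) (b : ℕ) {t : ℕ}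
    (ht : t ≤ l.length) :
    botRectSteps b (l.take t) = [] ↔ Dissects l (List.replicate b 1) 0 t := by
  induction b generalizing t with
  | zero =>
    change l.take t = [] ↔ 0 = t
    rw [List.take_eq_nil_iff]
    constructor
    · rintro (rfl | rfl)
      · rfl
      · exact (Nat.le_zero.1 ht).symm
    · exact fun h => Or.inl h.symm
  | succ b ih =>
    rw [List.replicate_succ']
    exact take_take_eq_nil_iff_dissects_append hl (F := botRectSteps b) (fun _ ht => ih ht) ht

theorem botRectSteps_botSqSteps_take_eq_nil_iff (hl : l.Pairwise (· ≥ ·)) (a b : ℕ) {t : ℕ}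
    (ht : t ≤ l.length) :
    botRectSteps b (botSqSteps a (l.take t)) = [] ↔
      Dissects l (List.replicate b 1 ++ List.replicate a 0) 0 t := by
  induction a generalizing t with
  | zero =>
    rw [List.replicate_zero, List.append_nil]
    exact botRectSteps_take_eq_nil_iff hl b ht
  | succ a ih =>
    rw [List.replicate_succ', ← List.append_assoc]
    exact take_take_eq_nil_iff_dissects_append hl (d := 0)
      (F := fun x => botRectSteps b (botSqSteps a x)) (fun _ ht => ih ht) ht

end BottomUp

theorem botRectSteps_botSqSteps_eq_nil_iff {l : List ℕ} (hl : l.Pairwise (· ≥ ·))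
    (a b : ℕ) :
    botRectSteps b (botSqSteps a l) = [] ↔ sqSteps a (rectSteps b l) = [] := by
  simpa using (botRectSteps_botSqSteps_take_eq_nil_iff hl a b le_rfl).trans
    (sqSteps_rectSteps_drop_eq_nil_iff hl a b (Nat.zero_le _)).symm

theorem bottom_eq_durfee_general (r i n : ℕ) :
    Set.ncard {l : List ℕ | IsPartitionOf n l ∧
        botRectSteps (r - i) (botSqSteps (i - 1) l) = []} =
    Set.ncard {l : List ℕ | IsPartitionOf n l ∧
        sqSteps (i - 1) (rectSteps (r - i) l) = []} := by
  congr 1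
  ext l
  exact and_congr_right fun hl => botRectSteps_botSqSteps_eq_nil_iff hl.1 _ _

/-- Theorem `𝓑_{r,i} = 𝓓_{r,i}` of the paper: for `2 ≤ r`, `1 ≤ i ≤ r`, the number of
partitions of `n` whose `(i−1)`-bottom dissection (`i−1` bottom squares followed by bottom
rectangles) has all bottom rectangles above `B'_{r−1}` empty equals the number of partitions
of `n` whose `(r−i)`-Durfee dissection (`r−i` horizontal Durfee rectangles followed by
Durfee squares) has all Durfee squares below `D_{r−1}` empty. -/
theorem bottom_eq_durfee (r i n : ℕ) (hr : 2 ≤ r) (hi1 : 1 ≤ i) (hir : i ≤ r) :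
    Set.ncard {l : List ℕ | IsPartitionOf n l ∧
        botRectSteps (r - i) (botSqSteps (i - 1) l) = []} =
    Set.ncard {l : List ℕ | IsPartitionOf n l ∧
        sqSteps (i - 1) (rectSteps (r - i) l) = []} :=
  bottom_eq_durfee_general r i n
end

section
/- Let λ be a partition with exactly r−1 non-empty successive Durfee squares of sizes d_{1} ≥ … ≥ d_{r−1}, and consider also its bottom dissection into successive bottom squares. Then for all 1 ≤ j ≤ r−1, h^D_j ≤ h^B_j < h^D_{j+1}, where h^B_j = b_1 + … + b_j is the cumulative height of the first j bottom squares and h^D_j = d_{r−1} + … + d_{r−j} is the cumulative height of the last j Durfee squares (with h^D_r = +∞). Moreover h^D_j = h^B_j if and only if, for each of the last j Durfee squares, the partition to its right has strictly fewer parts than the size of that square. -/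
/-- Size of the `j`-th Durfee square (`1`-indexed). -/
def dSize (l : List ℕ) (j : ℕ) : ℕ := durfSq (sqSteps (j - 1) l)

/-- Size of the `j`-th bottom square (`1`-indexed): the smallest part of what remains after
removing the first `j − 1` bottom squares. -/
def bSize (l : List ℕ) (j : ℕ) : ℕ := (botSqSteps (j - 1) l).getLastD 0

/-- `h^B_j = b_1 + ⋯ + b_j`, the height of the top of the `j`-th bottom square. -/
def hB (l : List ℕ) (j : ℕ) : ℕ := ∑ k ∈ Finset.Icc 1 j, bSize l k

/-- `h^D_j = d_{r−1} + ⋯ + d_{r−j}`, the height (from the bottom) of the top of the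
`(r−j)`-th Durfee square. -/
def hD (l : List ℕ) (r j : ℕ) : ℕ := ∑ k ∈ Finset.Icc 1 j, dSize l (r - k)

/-- The number of parts of `μ_m`, the sub-partition to the right of the `m`-th Durfee
square. -/
def muLen (l : List ℕ) (m : ℕ) : ℕ :=
  ((sqSteps (m - 1) l).take (dSize l m)).countP (fun x => decide (dSize l m < x))

/-!
Count rows from the bottom (row `h` is the list index `l.length - 1 - h`). Since `λ` has exactly
`r − 1` Durfee squares, the rows at heights `h^D_j, …, h^D_{j+1} − 1` are those of the Durfee
square `d_{r−(j+1)}`, and their parts lie between `d_{r−(j+1)}` and `d_{r−(j+2)}` (the parts below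
a Durfee square are at most its size). The side `b_{j+1}` of the next bottom square is the part in
row `h^B_j`; so if `h^D_j ≤ h^B_j < h^D_{j+1}`, then `d_{r−(j+1)} ≤ b_{j+1} ≤ d_{r−(j+2)}`, which
gives the same inequalities for `j + 1`. Equality `h^D_{j+1} = h^B_{j+1}` forces `h^D_j = h^B_j`
and `b_{j+1} = d_{r−(j+1)}`; `b_{j+1}` is then the part in the bottom row of the Durfee square,
which is at most `d_{r−(j+1)}` exactly when `μ_{r−(j+1)}` has fewer than `d_{r−(j+1)}` parts.
-/

namespace List

theorem SortedGE.antitone_getD {l : List ℕ} (hl : l.SortedGE) : Antitone (l.getD · 0) := by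
  intro i j hij
  by_cases hj : j < l.length
  · simp only [getD_eq_getElem _ _ hj, getD_eq_getElem _ _ (hij.trans_lt hj)]
    exact hl.getElem_ge_getElem_of_le hij
  · simp only [getD_eq_default _ _ (not_lt.1 hj), zero_le]

theorem countP_take_lt_iff_getD_le {L : List ℕ} (hL : L.SortedGE) {c d : ℕ} (hd : 0 < d) :
    (L.take d).countP (fun x => decide (c < x)) < d ↔ L.getD (d - 1) 0 ≤ c := by
  by_cases hdL : d ≤ L.length
  · have hlen : (L.take d).length = d := by simpa using hdL
    have hcount : (L.take d).countP (fun x => decide (c < x)) < d ↔ ∃ a ∈ L.take d, a ≤ c := by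
      simpa [hlen] using countP_lt_length_iff (l := L.take d) (p := fun x => decide (c < x))
    rw [hcount]
    constructor
    · rintro ⟨a, ha, hac⟩
      obtain ⟨i, hi, rfl⟩ := mem_iff_getElem.1 ha
      calc L.getD (d - 1) 0 ≤ L.getD i 0 := hL.antitone_getD (by omega)
        _ ≤ c := by rw [getD_eq_getElem _ _ (by omega)]; simpa using hac
    · intro h
      refine ⟨L[d - 1], mem_iff_getElem.2 ⟨d - 1, by omega, by simp⟩, ?_⟩
      rwa [getD_eq_getElem _ _ (by omega)] at h
  · have hlt : (L.take d).countP (fun x => decide (c < x)) < d :=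
      countP_le_length.trans_lt (by simp; omega)
    rw [getD_eq_default _ _ (by omega : L.length ≤ d - 1)]
    exact iff_of_true hlt (Nat.zero_le c)

end List

section DurfeeSquare

variable {l : List ℕ}

theorem durfSq_le_getD {i : ℕ} (hi : i < durfSq l) : durfSq l ≤ l.getD i 0 :=
  (Nat.findGreatest_spec (P := fun k => k ≤ l.length ∧ ∀ j < k, k ≤ l.getD j 0)
    (Nat.zero_le _) (by simp)).2 i hi

theorem getD_durfSq_le (hl : l.SortedGE) : l.getD (durfSq l) 0 ≤ durfSq l := by
  by_contra! h
  have hlen : durfSq l < l.length := by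
    by_contra! hlen
    rw [List.getD_eq_default _ _ hlen] at h
    exact Nat.not_lt_zero _ h
  refine Nat.findGreatest_is_greatest (P := fun k => k ≤ l.length ∧ ∀ j < k, k ≤ l.getD j 0)
    (Nat.lt_succ_self (durfSq l)) hlen ⟨hlen, fun j hj => ?_⟩
  exact h.trans_le (hl.antitone_getD (Nat.le_of_lt_succ hj))

theorem getD_drop_durfSq_le (hl : l.SortedGE) (i : ℕ) :
    (l.drop (durfSq l)).getD i 0 ≤ durfSq l := by
  rw [List.getD_eq_getElem?_getD, List.getElem?_drop, ← List.getD_eq_getElem?_getD]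
  exact (hl.antitone_getD (Nat.le_add_right _ _)).trans (getD_durfSq_le hl)

end DurfeeSquare

theorem sqSteps_succ' (m : ℕ) (l : List ℕ) :
    sqSteps (m + 1) l = (sqSteps m l).drop (durfSq (sqSteps m l)) := by
  induction m generalizing l with
  | zero => rfl
  | succ m ih => exact ih (l.drop (durfSq l))

theorem sqSteps_suffix (m : ℕ) (l : List ℕ) : sqSteps m l <:+ l := by
  induction m with
  | zero => exact List.suffix_refl l
  | succ m ih => exact (sqSteps_succ' m l ▸ List.drop_suffix _ _).trans ih

theorem botSqSteps_succ' (m : ℕ) (l : List ℕ) :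
    botSqSteps (m + 1) l =
      (botSqSteps m l).take ((botSqSteps m l).length - (botSqSteps m l).getLastD 0) := by
  induction m generalizing l with
  | zero => rfl
  | succ m ih => exact ih _

theorem hB_succ (l : List ℕ) (j : ℕ) : hB l (j + 1) = hB l j + bSize l (j + 1) :=
  Finset.sum_Icc_succ_top (by omega) _

theorem hD_succ (l : List ℕ) (r j : ℕ) : hD l r (j + 1) = hD l r j + dSize l (r - (j + 1)) :=
  Finset.sum_Icc_succ_top (by omega) _

theorem hD_mono (l : List ℕ) (r : ℕ) : Monotone (hD l r) := fun _ _ h =>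
  Finset.sum_le_sum_of_subset (Finset.Icc_subset_Icc_right h)

theorem botSqSteps_eq_take (l : List ℕ) (j : ℕ) : botSqSteps j l = l.take (l.length - hB l j) := by
  induction j with
  | zero => simp [botSqSteps, hB]
  | succ j ih =>
    have hb : (botSqSteps j l).getLastD 0 = bSize l (j + 1) := rfl
    rw [botSqSteps_succ', hb, ih, List.take_take, hB_succ, List.length_take]
    congr 1
    omega

theorem bSize_succ_eq_getD {l : List ℕ} {j : ℕ} (hj : hB l j < l.length) :
    bSize l (j + 1) = l.getD (l.length - hB l j - 1) 0 := by
  show (botSqSteps j l).getLastD 0 = _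
  rw [botSqSteps_eq_take, List.getLastD_eq_getLast?, List.getLast?_eq_getElem?,
    List.getD_eq_getElem?_getD, List.getElem?_take, List.length_take]
  simp [show l.length - hB l j - 1 < l.length - hB l j by omega]

theorem sqSteps_sortedGE {l : List ℕ} (hl : l.SortedGE) (m : ℕ) : (sqSteps m l).SortedGE :=
  (hl.pairwise.sublist (sqSteps_suffix m l).sublist).sortedGE

section ExactDurfeeSquares

variable {r : ℕ} {l : List ℕ}

theorem length_sqSteps_eq_hD (hexact : sqSteps (r - 1) l = []) {s : ℕ} (hs : s ≤ r - 1) :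
    (sqSteps (r - s - 1) l).length = hD l r s := by
  induction s with
  | zero => simp [hexact, hD]
  | succ s ih =>
    have h := congrArg List.length (sqSteps_succ' (r - (s + 1) - 1) l)
    rw [show r - (s + 1) - 1 + 1 = r - s - 1 by omega, ih (by omega), List.length_drop] at h
    have hd : durfSq (sqSteps (r - (s + 1) - 1) l) ≤ (sqSteps (r - (s + 1) - 1) l).length :=
      Nat.findGreatest_le _
    rw [hD_succ, dSize]
    omega

theorem length_eq_hD (hexact : sqSteps (r - 1) l = []) : l.length = hD l r (r - 1) := by
  simpa [show r - (r - 1) - 1 = 0 by omega, sqSteps] using length_sqSteps_eq_hD hexact le_rfl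

theorem getD_sqSteps (hexact : sqSteps (r - 1) l = []) {s : ℕ} (hs : s ≤ r - 1) (i : ℕ) :
    (sqSteps (r - s - 1) l).getD i 0 = l.getD (l.length - hD l r s + i) 0 := by
  rw [List.suffix_iff_eq_drop.1 (sqSteps_suffix _ l), length_sqSteps_eq_hD hexact hs,
    List.getD_eq_getElem?_getD, List.getElem?_drop, ← List.getD_eq_getElem?_getD]

theorem dSize_le_getD (hexact : sqSteps (r - 1) l = []) {s p : ℕ} (hs : s < r - 1)
    (hp₁ : l.length - hD l r (s + 1) ≤ p) (hp₂ : p < l.length - hD l r s) :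
    dSize l (r - (s + 1)) ≤ l.getD p 0 := by
  have hlen : hD l r (s + 1) ≤ l.length := length_eq_hD hexact ▸ hD_mono l r (by omega)
  obtain ⟨i, rfl⟩ : ∃ i, p = l.length - hD l r (s + 1) + i :=
    ⟨p - (l.length - hD l r (s + 1)), by omega⟩
  rw [← getD_sqSteps hexact (by omega)]
  apply durfSq_le_getD
  have := hD_succ l r s
  rw [dSize] at this
  omega

theorem getD_le_dSize (hl : l.SortedGE) (hexact : sqSteps (r - 1) l = []) {s p : ℕ}
    (hs : s + 1 < r - 1) (hp : l.length - hD l r (s + 1) ≤ p) :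
    l.getD p 0 ≤ dSize l (r - (s + 2)) := by
  obtain ⟨i, rfl⟩ : ∃ i, p = l.length - hD l r (s + 1) + i :=
    ⟨p - (l.length - hD l r (s + 1)), by omega⟩
  rw [← getD_sqSteps hexact (by omega), show r - (s + 1) - 1 = r - (s + 2) - 1 + 1 by omega,
    sqSteps_succ']
  exact getD_drop_durfSq_le (sqSteps_sortedGE hl _) i

end ExactDurfeeSquares

section Heights

variable {r : ℕ} {l : List ℕ}

theorem dSize_le_bSize_succ (hexact : sqSteps (r - 1) l = []) {j : ℕ} (hj : j < r - 1)
    (hlow : hD l r j ≤ hB l j) (hup : hB l j < hD l r (j + 1)) :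
    dSize l (r - (j + 1)) ≤ bSize l (j + 1) := by
  have hlen : hD l r (j + 1) ≤ l.length := length_eq_hD hexact ▸ hD_mono l r (by omega)
  rw [bSize_succ_eq_getD (by omega)]
  exact dSize_le_getD hexact hj (by omega) (by omega)

theorem bSize_succ_le_dSize (hl : l.SortedGE) (hexact : sqSteps (r - 1) l = []) {j : ℕ}
    (hj : j + 1 < r - 1) (hup : hB l j < hD l r (j + 1)) :
    bSize l (j + 1) ≤ dSize l (r - (j + 2)) := by
  have hlen : hD l r (j + 1) ≤ l.length := length_eq_hD hexact ▸ hD_mono l r (by omega)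
  rw [bSize_succ_eq_getD (by omega)]
  exact getD_le_dSize hl hexact hj (by omega)

theorem hD_succ_le_hB_succ (hexact : sqSteps (r - 1) l = []) {j : ℕ} (hj : j < r - 1)
    (hlow : hD l r j ≤ hB l j) (hup : hB l j < hD l r (j + 1)) :
    hD l r (j + 1) ≤ hB l (j + 1) := by
  rw [hD_succ, hB_succ]
  have := dSize_le_bSize_succ hexact hj hlow hup
  omega

theorem hB_mem_Ico (hl : l.SortedGE) (hexact : sqSteps (r - 1) l = [])
    (hpos : ∀ j, 1 ≤ j → j ≤ r - 1 → 0 < dSize l j) {j : ℕ} (hj : j < r - 1) :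
    hB l j ∈ Set.Ico (hD l r j) (hD l r (j + 1)) := by
  induction j with
  | zero =>
    refine ⟨by simp [hD], ?_⟩
    simpa [hB, hD] using hpos (r - 1) (by omega) le_rfl
  | succ j ih =>
    obtain ⟨hlow, hup⟩ := ih (by omega)
    refine ⟨hD_succ_le_hB_succ hexact (by omega) hlow hup, ?_⟩
    have := bSize_succ_le_dSize hl hexact hj hup
    rw [hB_succ, hD_succ l r (j + 1), show j + 1 + 1 = j + 2 from rfl]
    omega

theorem hD_le_hB (hl : l.SortedGE) (hexact : sqSteps (r - 1) l = [])
    (hpos : ∀ j, 1 ≤ j → j ≤ r - 1 → 0 < dSize l j) {j : ℕ} (hj : j ≤ r - 1) :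
    hD l r j ≤ hB l j := by
  rcases j with _ | j
  · simp [hD]
  · obtain ⟨hlow, hup⟩ := hB_mem_Ico hl hexact hpos (j := j) (by omega)
    exact hD_succ_le_hB_succ hexact (by omega) hlow hup

theorem hD_succ_eq_hB_succ_iff (hl : l.SortedGE) (hexact : sqSteps (r - 1) l = [])
    (hpos : ∀ j, 1 ≤ j → j ≤ r - 1 → 0 < dSize l j) {j : ℕ} (hj : j < r - 1) :
    hD l r (j + 1) = hB l (j + 1) ↔
      hD l r j = hB l j ∧ muLen l (r - (j + 1)) < dSize l (r - (j + 1)) := by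
  obtain ⟨hlow, hup⟩ := hB_mem_Ico hl hexact hpos hj
  have hdb := dSize_le_bSize_succ hexact hj hlow hup
  have hlen : hD l r (j + 1) ≤ l.length := length_eq_hD hexact ▸ hD_mono l r (by omega)
  have hsucc := hD_succ l r j
  have hmu : muLen l (r - (j + 1)) < dSize l (r - (j + 1)) ↔
      (sqSteps (r - (j + 1) - 1) l).getD (dSize l (r - (j + 1)) - 1) 0 ≤ dSize l (r - (j + 1)) :=
    List.countP_take_lt_iff_getD_le (sqSteps_sortedGE hl _) (hpos _ (by omega) (by omega))
  have hbottom_row : hD l r j = hB l j →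
      bSize l (j + 1) = (sqSteps (r - (j + 1) - 1) l).getD (dSize l (r - (j + 1)) - 1) 0 := by
    intro heq
    rw [bSize_succ_eq_getD (by omega), getD_sqSteps hexact (by omega)]
    congr 1
    omega
  rw [hmu, hsucc, hB_succ]
  constructor
  · intro h
    have heq : hD l r j = hB l j := by omega
    refine ⟨heq, ?_⟩
    rw [← hbottom_row heq]
    omega
  · rintro ⟨heq, hc⟩
    rw [← hbottom_row heq] at hc
    omega

theorem hD_eq_hB_iff (hl : l.SortedGE) (hexact : sqSteps (r - 1) l = [])
    (hpos : ∀ j, 1 ≤ j → j ≤ r - 1 → 0 < dSize l j) {j : ℕ} (hj : j ≤ r - 1) :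
    hD l r j = hB l j ↔ ∀ k, 1 ≤ k → k ≤ j → muLen l (r - k) < dSize l (r - k) := by
  induction j with
  | zero => exact iff_of_true (by simp [hD, hB]) fun k hk hk0 => by omega
  | succ j ih =>
    rw [hD_succ_eq_hB_succ_iff hl hexact hpos (by omega), ih (by omega)]
    constructor
    · rintro ⟨hprev, hlast⟩ k hk hkj
      rcases Nat.lt_or_eq_of_le hkj with hkj | rfl
      · exact hprev k hk (by omega)
      · exact hlast
    · intro hall
      exact ⟨fun k hk hkj => hall k hk (by omega), hall (j + 1) (by omega) le_rfl⟩

end Heights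

theorem heights_squares_general (r n : ℕ) (l : List ℕ) (hl : IsPartitionOf n l)
    (hpos : ∀ j, 1 ≤ j → j ≤ r - 1 → 0 < dSize l j)
    (hexact : sqSteps (r - 1) l = []) :
    ∀ j, 1 ≤ j → j ≤ r - 1 →
      hD l r j ≤ hB l j ∧
      (j + 1 ≤ r - 1 → hB l j < hD l r (j + 1)) ∧
      (hD l r j = hB l j ↔ ∀ k, 1 ≤ k → k ≤ j → muLen l (r - k) < dSize l (r - k)) := by
  intro j _ hj
  have hsorted : l.SortedGE := hl.1.sortedGE
  exact ⟨hD_le_hB hsorted hexact hpos hj, fun _ => (hB_mem_Ico hsorted hexact hpos (by omega)).2,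
    hD_eq_hB_iff hsorted hexact hpos hj⟩

/-- Proposition on heights for the all-squares dissections: if `λ` has exactly `r−1`
non-empty successive Durfee squares then `h^D_j ≤ h^B_j < h^D_{j+1}` for `1 ≤ j ≤ r−1`
(the right inequality with the convention `h^D_r = +∞`, i.e. only for `j + 1 ≤ r − 1`),
and `h^D_j = h^B_j` iff each of the partitions `μ_{r−1}, …, μ_{r−j}` to the right of the
last `j` Durfee squares has strictly fewer parts than the size of the corresponding
square. -/
theorem heights_squares (r n : ℕ) (hr : 2 ≤ r) (l : List ℕ) (hl : IsPartitionOf n l)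
    (hpos : ∀ j, 1 ≤ j → j ≤ r - 1 → 0 < dSize l j)
    (hexact : sqSteps (r - 1) l = []) :
    ∀ j, 1 ≤ j → j ≤ r - 1 →
      hD l r j ≤ hB l j ∧
      (j + 1 ≤ r - 1 → hB l j < hD l r (j + 1)) ∧
      (hD l r j = hB l j ↔ ∀ k, 1 ≤ k → k ≤ j → muLen l (r - k) < dSize l (r - k)) :=
  heights_squares_general r n l hl hpos hexact
end
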